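/- Define κ multiplicatively on nonzero ideals of 𝒪_K by κ(𝔭^k) = N(𝔭)^{k/2} + N(𝔭)^{k/2−1} for even k ≥ 2 and κ(𝔭^k) = 2·N(𝔭)^{(k−1)/2} for odd k, with κ(𝒪_K) = 1. Then for every nonzero ideal 𝔞, κ(𝔞) ≤ ι(𝔞)/√(N(𝔞)) as real numbers, where ι(𝔞) = N(𝔞)·∏_{𝔭|𝔞}(1 + 1/N(𝔭)). -/

import Mathlib

open scoped Classical

open NumberField

/-- The index function `ι(𝔞) = N(𝔞)·∏_{𝔭 ∣ 𝔞}(1 + 1/N(𝔭))` (real-valued). -/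
noncomputable def iotaIdxR (K : Type) [Field K] [NumberField K] (a : Ideal (𝓞 K)) : ℝ :=
  (Ideal.absNorm a : ℝ) *
    ∏ p ∈ (UniqueFactorizationMonoid.factors a).toFinset, (1 + 1 / (Ideal.absNorm p : ℝ))

/-!
Both `κ` and `𝔞 ↦ ι(𝔞)/√N(𝔞)` are multiplicative on coprime ideals, so it suffices to compare
them on a prime power `𝔭^k`, where with `q = N(𝔭)` the right-hand side is `√(q^k)·(1 + 1/q)`.
For even `k` this is exactly `κ(𝔭^k)`; for odd `k = 2n + 1` it is `q^n·(√q + 1/√q) ≥ 2q^n`.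
-/

theorem two_le_add_inv_self {s : ℝ} (hs : 0 < s) : 2 ≤ s + s⁻¹ := by
  rw [← sub_nonneg, show s + s⁻¹ - 2 = (s - 1) ^ 2 / s by field_simp; ring]
  positivity

theorem kappa_prime_pow_le {q : ℝ} (hq : 0 < q) {k : ℕ} (hk : 1 ≤ k) :
    (if Even k then q ^ (k / 2) + q ^ (k / 2 - 1) else 2 * q ^ ((k - 1) / 2)) ≤
      √(q ^ k) * (1 + 1 / q) := by
  rcases Nat.even_or_odd' k with ⟨n, rfl | rfl⟩
  · obtain ⟨n, rfl⟩ : ∃ m, n = m + 1 := Nat.exists_eq_add_one.mpr (by omega)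
    have hsqrt : √(q ^ (2 * (n + 1))) = q ^ (n + 1) := by
      rw [pow_mul', Real.sqrt_sq (by positivity)]
    rw [if_pos (even_two_mul _), hsqrt, show 2 * (n + 1) / 2 = n + 1 by omega,
      show n + 1 - 1 = n by omega]
    apply le_of_eq
    field_simp
    ring
  · have hsqrt : √(q ^ (2 * n + 1)) = q ^ n * √q := by
      rw [pow_succ, pow_mul', Real.sqrt_mul' _ hq.le, Real.sqrt_sq (by positivity)]
    have hs : 0 < √q := Real.sqrt_pos.mpr hq
    rw [if_neg (Nat.not_even_two_mul_add_one n), hsqrt, show (2 * n + 1 - 1) / 2 = n by omega]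
    calc 2 * q ^ n ≤ q ^ n * (√q + (√q)⁻¹) := by
          rw [mul_comm]; gcongr; exact two_le_add_inv_self hs
      _ = q ^ n * √q * (1 + 1 / q) := by
          field_simp
          rw [Real.sq_sqrt hq.le]
          ring

theorem UniqueFactorizationMonoid.nonneg_and_le_of_prime_pow {α : Type*}
    [CommMonoidWithZero α] [UniqueFactorizationMonoid α] {f g : α → ℝ}
    (hf : ∀ {x y}, x ≠ 0 → y ≠ 0 → IsRelPrime x y → f (x * y) = f x * f y)
    (hg : ∀ {x y}, x ≠ 0 → y ≠ 0 → IsRelPrime x y → g (x * y) = g x * g y)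
    (hunit : ∀ {u}, IsUnit u → 0 ≤ f u ∧ f u ≤ g u)
    (hpow : ∀ {p} {k : ℕ}, Prime p → 1 ≤ k → 0 ≤ f (p ^ k) ∧ f (p ^ k) ≤ g (p ^ k))
    {a : α} (ha : a ≠ 0) : 0 ≤ f a ∧ f a ≤ g a := by
  induction a using induction_on_coprime with
  | h0 => exact absurd rfl ha
  | h1 hu => exact hunit hu
  | hpr k hp =>
    rcases Nat.eq_zero_or_pos k with rfl | hk
    · exact hunit (by rw [pow_zero]; exact isUnit_one)
    · exact hpow hp hk
  | @hcp x y hxy hx hy =>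
    have hx0 : x ≠ 0 := left_ne_zero_of_mul ha
    have hy0 : y ≠ 0 := right_ne_zero_of_mul ha
    obtain ⟨hfx, hfgx⟩ := hx hx0
    obtain ⟨hfy, hfgy⟩ := hy hy0
    rw [hf hx0 hy0 hxy, hg hx0 hy0 hxy]
    exact ⟨mul_nonneg hfx hfy, mul_le_mul hfgx hfgy hfy (hfx.trans hfgx)⟩

theorem IsRelPrime.sup_eq_top {R : Type*} [CommRing R] [IsDedekindDomain R] {I J : Ideal R}
    (h : IsRelPrime I J) : I ⊔ J = ⊤ :=
  Ideal.isUnit_iff.mp <| h (Ideal.dvd_iff_le.mpr le_sup_left) (Ideal.dvd_iff_le.mpr le_sup_right)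

section iota

variable {K : Type} [Field K] [NumberField K]

open UniqueFactorizationMonoid

theorem iotaIdxR_one : iotaIdxR K 1 = 1 := by
  rw [iotaIdxR, factors_one]
  simp

theorem iotaIdxR_mul {a b : Ideal (𝓞 K)} (ha : a ≠ 0) (hb : b ≠ 0) (hab : IsRelPrime a b) :
    iotaIdxR K (a * b) = iotaIdxR K a * iotaIdxR K b := by
  simp only [iotaIdxR, factors_eq_normalizedFactors]
  rw [normalizedFactors_mul ha hb, Multiset.toFinset_add,
    Finset.prod_union (Multiset.disjoint_toFinset.mpr (disjoint_normalizedFactors hab)),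
    map_mul, Nat.cast_mul]
  ring

theorem iotaIdxR_prime_pow {p : Ideal (𝓞 K)} (hp : Prime p) {k : ℕ} (hk : 1 ≤ k) :
    iotaIdxR K (p ^ k) = (Ideal.absNorm p : ℝ) ^ k * (1 + 1 / (Ideal.absNorm p : ℝ)) := by
  rw [iotaIdxR, factors_eq_normalizedFactors, hp.irreducible.normalizedFactors_pow,
    normalize_eq p, Multiset.toFinset_replicate, if_neg (by omega), Finset.prod_singleton,
    map_pow, Nat.cast_pow]

theorem iotaIdxR_div_sqrt_mul {a b : Ideal (𝓞 K)} (ha : a ≠ 0) (hb : b ≠ 0)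
    (hab : IsRelPrime a b) :
    iotaIdxR K (a * b) / √(Ideal.absNorm (a * b) : ℝ) =
      iotaIdxR K a / √(Ideal.absNorm a : ℝ) * (iotaIdxR K b / √(Ideal.absNorm b : ℝ)) := by
  rw [iotaIdxR_mul ha hb hab, map_mul, Nat.cast_mul, Real.sqrt_mul (Nat.cast_nonneg _),
    mul_div_mul_comm]

theorem iotaIdxR_div_sqrt_prime_pow {p : Ideal (𝓞 K)} (hp : Prime p) {k : ℕ} (hk : 1 ≤ k) :
    iotaIdxR K (p ^ k) / √(Ideal.absNorm (p ^ k) : ℝ) =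
      √((Ideal.absNorm p : ℝ) ^ k) * (1 + 1 / (Ideal.absNorm p : ℝ)) := by
  rw [iotaIdxR_prime_pow hp hk, map_pow, Nat.cast_pow, mul_div_right_comm, Real.div_sqrt]

end iota

/-- If `κ` is the multiplicative function on nonzero ideals of `𝒪_K` with
`κ(𝔭^k) = N(𝔭)^{k/2} + N(𝔭)^{k/2−1}` for even `k` and `κ(𝔭^k) = 2·N(𝔭)^{(k−1)/2}` for
odd `k`, and `κ(𝒪_K) = 1`, then `κ(𝔞) ≤ ι(𝔞)/√(N 𝔞)` for every nonzero ideal `𝔞`. -/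
theorem kappa_le_iota_div_sqrt_norm (K : Type) [Field K] [NumberField K]
    (κ : Ideal (𝓞 K) → ℝ)
    (hone : κ 1 = 1)
    (hmul : ∀ a b : Ideal (𝓞 K), a ⊔ b = ⊤ → κ (a * b) = κ a * κ b)
    (hpp : ∀ p : Ideal (𝓞 K), Prime p → ∀ k : ℕ, 1 ≤ k →
      κ (p ^ k) =
        if Even k then
          (Ideal.absNorm p : ℝ) ^ (k / 2) + (Ideal.absNorm p : ℝ) ^ (k / 2 - 1)
        else 2 * (Ideal.absNorm p : ℝ) ^ ((k - 1) / 2)) :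
    ∀ a : Ideal (𝓞 K), a ≠ ⊥ →
      κ a ≤ iotaIdxR K a / Real.sqrt (Ideal.absNorm a) := by
  intro a ha
  refine (UniqueFactorizationMonoid.nonneg_and_le_of_prime_pow
    (f := κ) (g := fun a => iotaIdxR K a / √(Ideal.absNorm a : ℝ))
    (fun _ _ hxy => hmul _ _ hxy.sup_eq_top) iotaIdxR_div_sqrt_mul ?_ ?_ ha).2
  · intro u hu
    rw [Ideal.isUnit_iff.mp hu, ← Ideal.one_eq_top, hone, iotaIdxR_one]
    norm_num
  · intro p k hp hk
    have hq : (0 : ℝ) < Ideal.absNorm p :=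
      Nat.cast_pos.mpr (Nat.pos_of_ne_zero (Ideal.absNorm_eq_zero_iff.not.mpr hp.ne_zero))
    rw [hpp p hp k hk, iotaIdxR_div_sqrt_prime_pow hp hk]
    refine ⟨by split <;> positivity, kappa_prime_pow_le hq hk⟩
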